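/- arXiv:2509.24159 — 4 statements merged into one kernel-verified Lean document; each statement's English description precedes it below -/
import Mathlib

section
/- Let p₁,…,p_N ∈ (0,1), ℓ(η) = ∑ᵢ log(pᵢη + (1-pᵢ)(1-η)), and T(η) = (1/N) ∑ᵢ pᵢη/(pᵢη + (1-pᵢ)(1-η)). Then for all η ∈ (0,1), ℓ'(η) = (N/(η(1-η)))·(T(η) - η). In particular, η ∈ (0,1) is a stationary point of ℓ if and only if it is a fixed point of T. -/
/-!
Each summand of `ℓ` has derivative `(2p - 1) / d` with `d = pη + (1 - p)(1 - η)`, and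
`pη - ηd = η(1 - η)(2p - 1)`, so `(2p - 1) / d = (pη / d - η) / (η(1 - η))`. Summing over `i`
gives `ℓ'(η) = N (T(η) - η) / (η(1 - η))`, and the prefactor vanishes nowhere on `(0, 1)`.
-/

open Finset

lemma mixture_pos {p η : ℝ} (hp : p ∈ Set.Icc 0 1) (hη : η ∈ Set.Ioo 0 1) :
    0 < p * η + (1 - p) * (1 - η) := by
  obtain ⟨hp0, hp1⟩ := hp
  obtain ⟨hη0, hη1⟩ := hη
  rcases hp1.lt_or_eq with hp1 | rfl
  · have := mul_pos (sub_pos.mpr hp1) (sub_pos.mpr hη1)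
    nlinarith
  · linarith

lemma hasDerivAt_log_mixture {p η : ℝ} (hd : p * η + (1 - p) * (1 - η) ≠ 0) :
    HasDerivAt (fun x : ℝ => Real.log (p * x + (1 - p) * (1 - x)))
      ((2 * p - 1) / (p * η + (1 - p) * (1 - η))) η := by
  have hlin : HasDerivAt (fun x : ℝ => p * x + (1 - p) * (1 - x)) (2 * p - 1) η :=
    (((hasDerivAt_id' η).const_mul p).fun_add
      (((hasDerivAt_id' η).const_sub 1).const_mul (1 - p))).congr_deriv (by ring)
  exact hlin.log hd

lemma div_mixture_eq_em_gap {p η : ℝ} (hd : p * η + (1 - p) * (1 - η) ≠ 0)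
    (hη0 : η ≠ 0) (hη1 : 1 - η ≠ 0) :
    (2 * p - 1) / (p * η + (1 - p) * (1 - η)) =
      (p * η / (p * η + (1 - p) * (1 - η)) - η) / (η * (1 - η)) := by
  field_simp
  ring

lemma sum_div_mixture_eq_em_gap {ι : Type*} (s : Finset ι) (hs : s.Nonempty) (p : ι → ℝ)
    {η : ℝ} (hd : ∀ i ∈ s, p i * η + (1 - p i) * (1 - η) ≠ 0) (hη0 : η ≠ 0) (hη1 : 1 - η ≠ 0) :
    ∑ i ∈ s, (2 * p i - 1) / (p i * η + (1 - p i) * (1 - η)) =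
      ((#s : ℝ) / (η * (1 - η))) *
        ((1 / (#s : ℝ)) * ∑ i ∈ s, p i * η / (p i * η + (1 - p i) * (1 - η)) - η) := by
  have hcard : (#s : ℝ) ≠ 0 := by exact_mod_cast hs.card_pos.ne'
  rw [sum_congr rfl fun i hi => div_mixture_eq_em_gap (hd i hi) hη0 hη1, ← sum_div,
    sum_sub_distrib, sum_const, nsmul_eq_mul]
  generalize ∑ i ∈ s, p i * η / (p i * η + (1 - p i) * (1 - η)) = S
  field_simp

theorem loglik_deriv_eq_em_gap (N : ℕ) (hN : 0 < N) (p : Fin N → ℝ)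
    (hp : ∀ i, p i ∈ Set.Ioo (0:ℝ) 1) :
    ∀ η ∈ Set.Ioo (0:ℝ) 1,
      deriv (fun x : ℝ => ∑ i, Real.log (p i * x + (1 - p i) * (1 - x))) η =
        ((N : ℝ) / (η * (1 - η))) *
          ((1 / (N : ℝ)) * ∑ i, p i * η / (p i * η + (1 - p i) * (1 - η)) - η) ∧
      (deriv (fun x : ℝ => ∑ i, Real.log (p i * x + (1 - p i) * (1 - x))) η = 0 ↔
        (1 / (N : ℝ)) * ∑ i, p i * η / (p i * η + (1 - p i) * (1 - η)) = η) := by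
  intro η hη
  have hd : ∀ i, p i * η + (1 - p i) * (1 - η) ≠ 0 :=
    fun i => (mixture_pos (Set.Ioo_subset_Icc_self (hp i)) hη).ne'
  have hη0 : η ≠ 0 := hη.1.ne'
  have hη1 : 1 - η ≠ 0 := (sub_pos.mpr hη.2).ne'
  have hderiv : deriv (fun x : ℝ => ∑ i, Real.log (p i * x + (1 - p i) * (1 - x))) η =
      ((N : ℝ) / (η * (1 - η))) *
        ((1 / (N : ℝ)) * ∑ i, p i * η / (p i * η + (1 - p i) * (1 - η)) - η) := by
    have hsum := sum_div_mixture_eq_em_gap univ (univ_nonempty_iff.mpr ⟨⟨0, hN⟩⟩) p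
      (fun i _ => hd i) hη0 hη1
    rw [card_univ, Fintype.card_fin] at hsum
    rw [← hsum]
    exact (HasDerivAt.fun_sum fun i _ => hasDerivAt_log_mixture (hd i)).deriv
  have hfactor : (N : ℝ) / (η * (1 - η)) ≠ 0 :=
    div_ne_zero (by exact_mod_cast hN.ne') (mul_ne_zero hη0 hη1)
  refine ⟨hderiv, ?_⟩
  rw [hderiv, mul_eq_zero, or_iff_right hfactor, sub_eq_zero]
end

section
/- Let p₁,…,p_N ∈ (0,1) with at least one pⱼ ≠ 1/2, and T(η) = (1/N) ∑ᵢ pᵢη/(pᵢη + (1-pᵢ)(1-η)). Then T has at most one fixed point in (0,1). -/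
/-!
A fixed point `η ∈ (0,1)` of `T` satisfies `T η - η = η (1 - η) / N · ℓ'(η)`, so it is a zero of the
score `ℓ'(η) = ∑ᵢ (2pᵢ - 1) / (pᵢη + (1-pᵢ)(1-η))`. Each denominator is affine in `η` with slope
`2pᵢ - 1`, so each summand is nonincreasing in `η`, strictly when `pᵢ ≠ 1/2`. Hence `ℓ'` is strictly
decreasing on `(0,1)` and has at most one zero there.
-/

open Set

namespace EMReliability

def likelihood (p η : ℝ) : ℝ := p * η + (1 - p) * (1 - η)

/-- The derivative of the log-likelihood `η ↦ ∑ i, log (likelihood (p i) η)`. -/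
noncomputable def score {ι : Type*} [Fintype ι] (p : ι → ℝ) (η : ℝ) : ℝ :=
  ∑ i, (2 * p i - 1) / likelihood (p i) η

lemma likelihood_pos {p η : ℝ} (hp : p ∈ Icc 0 1) (hη : η ∈ Ioo 0 1) : 0 < likelihood p η := by
  obtain ⟨hp0, hp1⟩ := hp
  obtain ⟨hη0, hη1⟩ := hη
  unfold likelihood
  nlinarith [mul_nonneg hp0 hη0.le, mul_nonneg (sub_nonneg.2 hp1) (sub_pos.2 hη1).le]

lemma posterior_sub_self {p η : ℝ} (h : likelihood p η ≠ 0) :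
    p * η / likelihood p η - η = η * (1 - η) * ((2 * p - 1) / likelihood p η) := by
  unfold likelihood at *
  field_simp
  ring

lemma div_likelihood_sub_div_likelihood {p a b : ℝ} (ha : likelihood p a ≠ 0)
    (hb : likelihood p b ≠ 0) :
    (2 * p - 1) / likelihood p a - (2 * p - 1) / likelihood p b
      = (b - a) * ((2 * p - 1) ^ 2 / (likelihood p a * likelihood p b)) := by
  rw [div_sub_div _ _ ha hb, ← mul_div_assoc]
  unfold likelihood
  ring

variable {ι : Type*} [Fintype ι] {p : ι → ℝ}

lemma score_eq_zero_of_isFixedPt {η : ℝ} (hp : ∀ i, p i ∈ Icc 0 1) (hη : η ∈ Ioo 0 1)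
    (hfix : (1 / (Fintype.card ι : ℝ)) * ∑ i, p i * η / likelihood (p i) η = η) :
    score p η = 0 := by
  have hsum : ∑ i, p i * η / likelihood (p i) η = Fintype.card ι * η := by
    rcases eq_or_ne (Fintype.card ι : ℝ) 0 with hN | hN
    · simp only [hN, div_zero, zero_mul] at hfix
      linarith [hη.1]
    · field_simp at hfix
      linarith
  have hsub : η * (1 - η) * score p η = 0 := by
    rw [score, Finset.mul_sum]
    simp_rw [← posterior_sub_self (likelihood_pos (hp _) hη).ne']
    rw [Finset.sum_sub_distrib, hsum, Finset.sum_const, Finset.card_univ, nsmul_eq_mul, sub_self]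
  have hη0 : η * (1 - η) ≠ 0 := (mul_pos hη.1 (sub_pos.2 hη.2)).ne'
  exact (mul_eq_zero.1 hsub).resolve_left hη0

lemma strictAntiOn_score (hp : ∀ i, p i ∈ Icc 0 1) (hinf : ∃ j, p j ≠ 1 / 2) :
    StrictAntiOn (score p) (Ioo 0 1) := by
  intro a ha b hb hab
  have hprod : ∀ i, 0 < likelihood (p i) a * likelihood (p i) b := fun i =>
    mul_pos (likelihood_pos (hp i) ha) (likelihood_pos (hp i) hb)
  have hdiff : ∀ i, (2 * p i - 1) / likelihood (p i) a - (2 * p i - 1) / likelihood (p i) b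
      = (b - a) * ((2 * p i - 1) ^ 2 / (likelihood (p i) a * likelihood (p i) b)) := fun i =>
    div_likelihood_sub_div_likelihood (likelihood_pos (hp i) ha).ne' (likelihood_pos (hp i) hb).ne'
  obtain ⟨j, hj⟩ := hinf
  refine Finset.sum_lt_sum (fun i _ => ?_) ⟨j, Finset.mem_univ j, ?_⟩
  · rw [← sub_nonneg, hdiff]
    exact mul_nonneg (sub_pos.2 hab).le (div_nonneg (sq_nonneg _) (hprod i).le)
  · have hj' : 2 * p j - 1 ≠ 0 := fun h => hj (by linarith)
    rw [← sub_pos, hdiff]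
    exact mul_pos (sub_pos.2 hab) (div_pos (sq_pos_of_ne_zero hj') (hprod j))

end EMReliability

open EMReliability in
theorem em_fixed_point_unique (N : ℕ) (p : Fin N → ℝ) (hp : ∀ i, p i ∈ Set.Ioo (0:ℝ) 1)
    (hinf : ∃ j, p j ≠ 1 / 2)
    (η₁ η₂ : ℝ) (hη₁ : η₁ ∈ Set.Ioo (0:ℝ) 1) (hη₂ : η₂ ∈ Set.Ioo (0:ℝ) 1)
    (hfix₁ : (1 / (N : ℝ)) * ∑ i, p i * η₁ / (p i * η₁ + (1 - p i) * (1 - η₁)) = η₁)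
    (hfix₂ : (1 / (N : ℝ)) * ∑ i, p i * η₂ / (p i * η₂ + (1 - p i) * (1 - η₂)) = η₂) :
    η₁ = η₂ := by
  have hp' : ∀ i, p i ∈ Icc 0 1 := fun i => Ioo_subset_Icc_self (hp i)
  have hscore : ∀ η ∈ Ioo (0:ℝ) 1,
      (1 / (N : ℝ)) * ∑ i, p i * η / (p i * η + (1 - p i) * (1 - η)) = η → score p η = 0 :=
    fun η hη hfix => score_eq_zero_of_isFixedPt hp' hη (by rwa [Fintype.card_fin])
  exact (strictAntiOn_score hp' hinf).injOn hη₁ hη₂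
    ((hscore η₁ hη₁ hfix₁).trans (hscore η₂ hη₂ hfix₂).symm)
end

section
/- Let p₁,…,p_N ∈ (0,1) with at least one pⱼ ≠ 1/2, and T(η) = (1/N) ∑ᵢ pᵢη/(pᵢη+(1-pᵢ)(1-η)). Let η̂ ∈ (0,1) be the (unique) fixed point of T. Then for η < η̂ we have T(η) > η, and for η > η̂ we have T(η) < η. -/
/-!
The EM update moves η towards η̂ because
`T(η) - η = η(1-η)/N · ℓ'(η)`, where `ℓ'(η) = ∑ᵢ (2pᵢ-1)/(pᵢη + (1-pᵢ)(1-η))`.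
Each summand is `c/((1-pᵢ) + cη)` with `c = 2pᵢ-1`, which is non-increasing in η and strictly
decreasing when `pᵢ ≠ 1/2`; so `ℓ'` is strictly decreasing on `(0,1)`. It vanishes at the fixed
point η̂, hence is positive to its left and negative to its right, and `T(η) - η` has the same sign.
-/

open Finset Set

section EMUpdate

variable {ι : Type*} [Fintype ι] {p : ι → ℝ} {a x y : ℝ}

/-- The score `ℓ'(η)` of the log-likelihood `ℓ(η) = ∑ᵢ log (pᵢη + (1-pᵢ)(1-η))`. -/
noncomputable def emScore (p : ι → ℝ) (η : ℝ) : ℝ :=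
  ∑ i, (2 * p i - 1) / (p i * η + (1 - p i) * (1 - η))

noncomputable def emUpdate (p : ι → ℝ) (η : ℝ) : ℝ :=
  (1 / (Fintype.card ι : ℝ)) * ∑ i, p i * η / (p i * η + (1 - p i) * (1 - η))

lemma mixture_pos_s12 (ha : a ∈ Icc (0 : ℝ) 1) (hx : x ∈ Ioo (0 : ℝ) 1) :
    0 < a * x + (1 - a) * (1 - x) := by
  have hsq : a * x + (1 - a) * (1 - x) - x * (1 - x) = a * x ^ 2 + (1 - a) * (1 - x) ^ 2 := by ring
  nlinarith [mul_nonneg ha.1 (sq_nonneg x), mul_nonneg (sub_nonneg.mpr ha.2) (sq_nonneg (1 - x)),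
    mul_pos hx.1 (sub_pos.mpr hx.2)]

lemma emScore_term_le (ha : a ∈ Icc (0 : ℝ) 1) (hx : x ∈ Ioo (0 : ℝ) 1) (hy : y ∈ Ioo (0 : ℝ) 1)
    (hxy : x ≤ y) :
    (2 * a - 1) / (a * y + (1 - a) * (1 - y)) ≤ (2 * a - 1) / (a * x + (1 - a) * (1 - x)) := by
  rw [div_le_div_iff₀ (mixture_pos_s12 ha hy) (mixture_pos_s12 ha hx)]
  nlinarith [mul_nonneg (sq_nonneg (2 * a - 1)) (sub_nonneg.mpr hxy)]

lemma emScore_term_lt (ha : a ∈ Icc (0 : ℝ) 1) (ha' : a ≠ 1 / 2) (hx : x ∈ Ioo (0 : ℝ) 1)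
    (hy : y ∈ Ioo (0 : ℝ) 1) (hxy : x < y) :
    (2 * a - 1) / (a * y + (1 - a) * (1 - y)) < (2 * a - 1) / (a * x + (1 - a) * (1 - x)) := by
  have hc : 2 * a - 1 ≠ 0 := fun h => ha' (by linarith)
  rw [div_lt_div_iff₀ (mixture_pos_s12 ha hy) (mixture_pos_s12 ha hx)]
  nlinarith [mul_pos (sub_pos.mpr hxy) (mul_self_pos.mpr hc)]

lemma emScore_strictAntiOn (hp : ∀ i, p i ∈ Icc (0 : ℝ) 1) (hne : ∃ j, p j ≠ 1 / 2) :
    StrictAntiOn (emScore p) (Ioo 0 1) := by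
  intro x hx y hy hxy
  obtain ⟨j, hj⟩ := hne
  exact Finset.sum_lt_sum (fun i _ => emScore_term_le (hp i) hx hy hxy.le)
    ⟨j, mem_univ j, emScore_term_lt (hp j) hj hx hy hxy⟩

lemma emUpdate_sub_self [Nonempty ι] (hp : ∀ i, p i ∈ Icc (0 : ℝ) 1) (hx : x ∈ Ioo (0 : ℝ) 1) :
    emUpdate p x - x = x * (1 - x) / Fintype.card ι * emScore p x := by
  have hcard : (Fintype.card ι : ℝ) ≠ 0 := Nat.cast_ne_zero.mpr Fintype.card_ne_zero
  have hterm : ∀ i, p i * x / (p i * x + (1 - p i) * (1 - x)) - x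
      = x * (1 - x) * ((2 * p i - 1) / (p i * x + (1 - p i) * (1 - x))) := by
    intro i
    have hd := (mixture_pos_s12 (hp i) hx).ne'
    field_simp
    ring
  have hsum : ∑ i, p i * x / (p i * x + (1 - p i) * (1 - x)) - Fintype.card ι * x
      = x * (1 - x) * emScore p x := by
    rw [emScore, mul_sum, ← sum_congr rfl fun i _ => hterm i, sum_sub_distrib, sum_const,
      card_univ, nsmul_eq_mul]
  rw [div_mul_eq_mul_div _ _ (emScore p x), ← hsum, emUpdate, sub_div,
    mul_div_cancel_left₀ x hcard, one_div_mul_eq_div]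

lemma mul_one_sub_div_card_pos [Nonempty ι] (hx : x ∈ Ioo (0 : ℝ) 1) :
    0 < x * (1 - x) / Fintype.card ι :=
  div_pos (mul_pos hx.1 (sub_pos.mpr hx.2)) (Nat.cast_pos.mpr Fintype.card_pos)

lemma emScore_eq_zero_of_emUpdate_eq [Nonempty ι] (hp : ∀ i, p i ∈ Icc (0 : ℝ) 1)
    (hx : x ∈ Ioo (0 : ℝ) 1) (hfix : emUpdate p x = x) : emScore p x = 0 := by
  have h := emUpdate_sub_self hp hx
  rw [hfix, sub_self, eq_comm, mul_eq_zero] at h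
  exact h.resolve_left (mul_one_sub_div_card_pos (ι := ι) hx).ne'

lemma lt_emUpdate_of_emScore_pos [Nonempty ι] (hp : ∀ i, p i ∈ Icc (0 : ℝ) 1)
    (hx : x ∈ Ioo (0 : ℝ) 1) (hS : 0 < emScore p x) : x < emUpdate p x := by
  have h := emUpdate_sub_self hp hx
  linarith [mul_pos (mul_one_sub_div_card_pos (ι := ι) hx) hS]

lemma emUpdate_lt_of_emScore_neg [Nonempty ι] (hp : ∀ i, p i ∈ Icc (0 : ℝ) 1)
    (hx : x ∈ Ioo (0 : ℝ) 1) (hS : emScore p x < 0) : emUpdate p x < x := by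
  have h := emUpdate_sub_self hp hx
  linarith [mul_neg_of_pos_of_neg (mul_one_sub_div_card_pos (ι := ι) hx) hS]

end EMUpdate

theorem em_gap_sign_general (N : ℕ) (p : Fin N → ℝ)
    (hp : ∀ i, p i ∈ Set.Ioo (0:ℝ) 1) (hinf : ∃ j, p j ≠ 1 / 2)
    (ηhat : ℝ) (hηhat : ηhat ∈ Set.Ioo (0:ℝ) 1)
    (hfix : (1 / (N : ℝ)) * ∑ i, p i * ηhat / (p i * ηhat + (1 - p i) * (1 - ηhat)) = ηhat) :
    ∀ η ∈ Set.Ioo (0:ℝ) 1,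
      (η < ηhat → η < (1 / (N : ℝ)) * ∑ i, p i * η / (p i * η + (1 - p i) * (1 - η))) ∧
      (ηhat < η → (1 / (N : ℝ)) * ∑ i, p i * η / (p i * η + (1 - p i) * (1 - η)) < η) := by
  have : Nonempty (Fin N) := hinf.nonempty
  have hp' : ∀ i, p i ∈ Icc (0 : ℝ) 1 := fun i => Ioo_subset_Icc_self (hp i)
  have hT : ∀ η, emUpdate p η = (1 / (N : ℝ)) * ∑ i, p i * η / (p i * η + (1 - p i) * (1 - η)) :=
    fun η => by rw [emUpdate, Fintype.card_fin]
  have hS0 : emScore p ηhat = 0 := emScore_eq_zero_of_emUpdate_eq hp' hηhat (by rw [hT, hfix])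
  have hanti := emScore_strictAntiOn hp' hinf
  intro η hη
  rw [← hT]
  exact ⟨fun h => lt_emUpdate_of_emScore_pos hp' hη (hS0 ▸ hanti hη hηhat h),
    fun h => emUpdate_lt_of_emScore_neg hp' hη (hS0 ▸ hanti hηhat hη h)⟩

theorem em_gap_sign (N : ℕ) (hN : 0 < N) (p : Fin N → ℝ)
    (hp : ∀ i, p i ∈ Set.Ioo (0:ℝ) 1) (hinf : ∃ j, p j ≠ 1 / 2)
    (ηhat : ℝ) (hηhat : ηhat ∈ Set.Ioo (0:ℝ) 1)
    (hfix : (1 / (N : ℝ)) * ∑ i, p i * ηhat / (p i * ηhat + (1 - p i) * (1 - ηhat)) = ηhat) :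
    ∀ η ∈ Set.Ioo (0:ℝ) 1,
      (η < ηhat → η < (1 / (N : ℝ)) * ∑ i, p i * η / (p i * η + (1 - p i) * (1 - η))) ∧
      (ηhat < η → (1 / (N : ℝ)) * ∑ i, p i * η / (p i * η + (1 - p i) * (1 - η)) < η) :=
  em_gap_sign_general N p hp hinf ηhat hηhat hfix
end

section
/- Let p₁,…,p_N ∈ (0,1) with at least one pⱼ ≠ 1/2, T(η) = (1/N) ∑ᵢ pᵢη/(pᵢη+(1-pᵢ)(1-η)), and η̂ its unique fixed point in (0,1). Then for any initialization η⁽⁰⁾ ∈ (0,1), the iterates η⁽ᵗ⁺¹⁾ = T(η⁽ᵗ⁾) converge to η̂ as t → ∞. -/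
/-!
Writing `Dᵢ(η) = pᵢη + (1 - pᵢ)(1 - η) > 0`, one has
`T η - η = η(1 - η)/N · ∑ᵢ (2pᵢ - 1)/Dᵢ(η)`, and each summand is antitone in `η`, strictly so
when `pᵢ ≠ 1/2`. The sum therefore vanishes exactly at `η̂`, and `T` moves every `η ∈ (0,1)`
towards `η̂`. Since `T` is also monotone, an orbit stays between its starting point and `η̂` and
is monotone; its limit is a fixed point of the continuous map `T`, hence `η̂`.
-/

open Filter Set Topology Function

section Orbit

variable {α : Type*} [ConditionallyCompleteLinearOrder α] [TopologicalSpace α] [OrderTopology α]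
  {T : α → α} {s : Set α} {c : α} {a : ℕ → α}

theorem tendsto_orbit_of_monotoneOn_of_le (hs : s.OrdConnected) (hmono : MonotoneOn T s)
    (hcont : ContinuousOn T s) (hc : c ∈ s) (hfix : IsFixedPt T c)
    (hlt : ∀ x ∈ s, x < c → x < T x) (ha0 : a 0 ∈ s) (hac : a 0 ≤ c)
    (hrec : ∀ t, a (t + 1) = T (a t)) : Tendsto a atTop (𝓝 c) := by
  have hIcc : Icc (a 0) c ⊆ s := hs.out ha0 hc
  have hle : ∀ x ∈ Icc (a 0) c, x ≤ T x := fun x hx =>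
    hx.2.eq_or_lt.elim (fun h => h ▸ hfix.ge) fun h => (hlt x (hIcc hx) h).le
  have hmem : ∀ t, a t ∈ Icc (a 0) c := by
    intro t
    induction t with
    | zero => exact ⟨le_rfl, hac⟩
    | succ t ih =>
      rw [hrec]
      exact ⟨ih.1.trans (hle _ ih), hfix ▸ hmono (hIcc ih) hc ih.2⟩
  have hbdd : BddAbove (range a) := ⟨c, forall_mem_range.2 fun t => (hmem t).2⟩
  have htend : Tendsto a atTop (𝓝 (⨆ t, a t)) :=
    tendsto_atTop_ciSup (monotone_nat_of_le_succ fun t => hrec t ▸ hle _ (hmem t)) hbdd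
  have hL : ⨆ t, a t ∈ Icc (a 0) c := ⟨le_ciSup hbdd 0, ciSup_le fun t => (hmem t).2⟩
  have hLfix : T (⨆ t, a t) = ⨆ t, a t := by
    have hTa : Tendsto (T ∘ a) atTop (𝓝 (T (⨆ t, a t))) :=
      (hcont _ (hIcc hL)).tendsto.comp
        (tendsto_nhdsWithin_iff.2 ⟨htend, Eventually.of_forall fun t => hIcc (hmem t)⟩)
    refine tendsto_nhds_unique hTa ?_
    simpa only [comp_def, ← hrec] using htend.comp (tendsto_add_atTop_nat 1)
  obtain hLc | hLc := hL.2.eq_or_lt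
  · exact hLc ▸ htend
  · exact absurd hLfix (hlt _ (hIcc hL) hLc).ne'

theorem tendsto_orbit_of_monotoneOn (hs : s.OrdConnected) (hmono : MonotoneOn T s)
    (hcont : ContinuousOn T s) (hc : c ∈ s) (hfix : IsFixedPt T c)
    (hlt : ∀ x ∈ s, x < c → x < T x) (hgt : ∀ x ∈ s, c < x → T x < x) (ha0 : a 0 ∈ s)
    (hrec : ∀ t, a (t + 1) = T (a t)) : Tendsto a atTop (𝓝 c) := by
  rcases le_total (a 0) c with hac | hca
  · exact tendsto_orbit_of_monotoneOn_of_le hs hmono hcont hc hfix hlt ha0 hac hrec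
  · exact tendsto_orbit_of_monotoneOn_of_le (α := αᵒᵈ) (T := T) hs.dual hmono.dual hcont hc
      hfix hgt ha0 hca hrec

end Orbit

theorem Finset.strictAntiOn_sum {ι α β : Type*} [Preorder α] [AddCommMonoid β]
    [PartialOrder β] [IsOrderedCancelAddMonoid β] {s : Finset ι} {S : Set α} {f : ι → α → β}
    (hf : ∀ i ∈ s, AntitoneOn (f i) S) (hj : ∃ j ∈ s, StrictAntiOn (f j) S) :
    StrictAntiOn (fun x => ∑ i ∈ s, f i x) S := by
  obtain ⟨j, hjs, hj⟩ := hj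
  exact fun x hx y hy hxy => Finset.sum_lt_sum (fun i hi => hf i hi hx hy hxy.le)
    ⟨j, hjs, hj hx hy hxy⟩

noncomputable section

/-- Bayes' rule: the posterior of an event of prior probability `η` after an observation
that has likelihood `p` under the event and `1 - p` under its complement. -/
def bayesUpdate (p η : ℝ) : ℝ := p * η / (p * η + (1 - p) * (1 - η))

def bayesDrift (p η : ℝ) : ℝ := (2 * p - 1) / (p * η + (1 - p) * (1 - η))

def emMap {ι : Type*} [Fintype ι] (p : ι → ℝ) (η : ℝ) : ℝ :=
  1 / (Fintype.card ι : ℝ) * ∑ i, bayesUpdate (p i) η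

end

section BayesUpdate

variable {p x y η : ℝ}

theorem bayes_denom_pos (hp : p ∈ Ioo 0 1) (hη : η ∈ Icc 0 1) :
    0 < p * η + (1 - p) * (1 - η) := by
  obtain ⟨hp0, hp1⟩ := hp
  obtain ⟨hη0, hη1⟩ := hη
  nlinarith [mul_nonneg (mul_nonneg hp0.le hη0) hp0.le,
    mul_nonneg (mul_nonneg (sub_pos.2 hp1).le (sub_nonneg.2 hη1)) (sub_pos.2 hp1).le,
    mul_pos hp0 (sub_pos.2 hp1)]

theorem bayesUpdate_sub_bayesUpdate (hx : p * x + (1 - p) * (1 - x) ≠ 0)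
    (hy : p * y + (1 - p) * (1 - y) ≠ 0) :
    bayesUpdate p y - bayesUpdate p x =
      p * (1 - p) * (y - x) / ((p * x + (1 - p) * (1 - x)) * (p * y + (1 - p) * (1 - y))) := by
  unfold bayesUpdate
  field_simp
  ring

theorem bayesDrift_sub_bayesDrift (hx : p * x + (1 - p) * (1 - x) ≠ 0)
    (hy : p * y + (1 - p) * (1 - y) ≠ 0) :
    bayesDrift p x - bayesDrift p y = (2 * p - 1) ^ 2 * (y - x) /
      ((p * x + (1 - p) * (1 - x)) * (p * y + (1 - p) * (1 - y))) := by
  unfold bayesDrift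
  field_simp
  ring

theorem bayesUpdate_sub_self (hη : p * η + (1 - p) * (1 - η) ≠ 0) :
    bayesUpdate p η - η = η * (1 - η) * bayesDrift p η := by
  unfold bayesUpdate bayesDrift
  field_simp
  ring

variable (hp : p ∈ Ioo 0 1)
include hp

theorem continuousOn_bayesUpdate : ContinuousOn (bayesUpdate p) (Icc 0 1) :=
  ContinuousOn.div (by fun_prop) (by fun_prop) fun _ hη => (bayes_denom_pos hp hη).ne'

theorem monotoneOn_bayesUpdate : MonotoneOn (bayesUpdate p) (Icc 0 1) := by
  intro x hx y hy hxy
  have hDx := bayes_denom_pos hp hx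
  have hDy := bayes_denom_pos hp hy
  rw [← sub_nonneg, bayesUpdate_sub_bayesUpdate hDx.ne' hDy.ne']
  exact div_nonneg (mul_nonneg (mul_nonneg hp.1.le (sub_pos.2 hp.2).le) (sub_nonneg.2 hxy))
    (mul_pos hDx hDy).le

theorem antitoneOn_bayesDrift : AntitoneOn (bayesDrift p) (Icc 0 1) := by
  intro x hx y hy hxy
  have hDx := bayes_denom_pos hp hx
  have hDy := bayes_denom_pos hp hy
  rw [← sub_nonneg, bayesDrift_sub_bayesDrift hDx.ne' hDy.ne']
  exact div_nonneg (mul_nonneg (sq_nonneg _) (sub_nonneg.2 hxy)) (mul_pos hDx hDy).le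

theorem strictAntiOn_bayesDrift (hp' : p ≠ 1 / 2) : StrictAntiOn (bayesDrift p) (Icc 0 1) := by
  intro x hx y hy hxy
  have hDx := bayes_denom_pos hp hx
  have hDy := bayes_denom_pos hp hy
  have hp'' : 2 * p - 1 ≠ 0 := fun h => hp' (by linarith)
  rw [← sub_pos, bayesDrift_sub_bayesDrift hDx.ne' hDy.ne']
  exact div_pos (mul_pos (by positivity) (sub_pos.2 hxy)) (mul_pos hDx hDy)

end BayesUpdate

section EMMap

variable {ι : Type*} [Fintype ι] {p : ι → ℝ} {c η : ℝ}

theorem continuousOn_emMap (hp : ∀ i, p i ∈ Ioo 0 1) : ContinuousOn (emMap p) (Icc 0 1) :=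
  continuousOn_const.mul (continuousOn_finsetSum _ fun i _ => continuousOn_bayesUpdate (hp i))

theorem monotoneOn_emMap (hp : ∀ i, p i ∈ Ioo 0 1) : MonotoneOn (emMap p) (Icc 0 1) :=
  fun _ hx _ hy hxy => mul_le_mul_of_nonneg_left
    (Finset.sum_le_sum fun i _ => monotoneOn_bayesUpdate (hp i) hx hy hxy) (by positivity)

theorem emMap_sub_self [Nonempty ι] (hp : ∀ i, p i ∈ Ioo 0 1) (hη : η ∈ Icc 0 1) :
    emMap p η - η = η * (1 - η) / Fintype.card ι * ∑ i, bayesDrift (p i) η := by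
  have h : ∀ i, bayesUpdate (p i) η = η * (1 - η) * bayesDrift (p i) η + η := fun i =>
    eq_add_of_sub_eq (bayesUpdate_sub_self (bayes_denom_pos (hp i) hη).ne')
  have hcard : (Fintype.card ι : ℝ) ≠ 0 := Nat.cast_ne_zero.2 Fintype.card_ne_zero
  simp only [emMap, h, Finset.sum_add_distrib, Finset.sum_const, Finset.card_univ, nsmul_eq_mul,
    ← Finset.mul_sum]
  field_simp
  ring

theorem sign_emMap_sub_self [Nonempty ι] (hp : ∀ i, p i ∈ Ioo 0 1) (hη : η ∈ Ioo 0 1) :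
    SignType.sign (emMap p η - η) = SignType.sign (∑ i, bayesDrift (p i) η) := by
  have hfac : 0 < η * (1 - η) / Fintype.card ι := by
    have := sub_pos.2 hη.2
    have := hη.1
    positivity
  rw [emMap_sub_self hp (Ioo_subset_Icc_self hη), sign_mul, sign_pos hfac, one_mul]

theorem sign_emMap_sub_self_eq_sign_sub (hp : ∀ i, p i ∈ Ioo 0 1) (hinf : ∃ j, p j ≠ 1 / 2)
    (hc : c ∈ Ioo 0 1) (hfix : IsFixedPt (emMap p) c) (hη : η ∈ Ioo 0 1) :
    SignType.sign (emMap p η - η) = SignType.sign (c - η) := by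
  obtain ⟨j, hj⟩ := hinf
  have : Nonempty ι := ⟨j⟩
  have hanti : StrictAntiOn (fun η => ∑ i, bayesDrift (p i) η) (Icc 0 1) :=
    Finset.strictAntiOn_sum (fun i _ => antitoneOn_bayesDrift (hp i))
      ⟨j, Finset.mem_univ j, strictAntiOn_bayesDrift (hp j) hj⟩
  have hc0 : ∑ i, bayesDrift (p i) c = 0 := by
    simpa [hfix.eq] using (sign_emMap_sub_self hp hc).symm
  have hc' := Ioo_subset_Icc_self hc
  have hη' := Ioo_subset_Icc_self hη
  rw [sign_emMap_sub_self hp hη]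
  rcases lt_trichotomy η c with hlt | rfl | hgt
  · rw [sign_pos (sub_pos.2 hlt), sign_pos (hc0 ▸ hanti hη' hc' hlt)]
  · rw [hc0, sub_self]
  · rw [sign_neg (sub_neg.2 hgt), sign_neg (hc0 ▸ hanti hc' hη' hgt)]

theorem lt_emMap_of_lt (hp : ∀ i, p i ∈ Ioo 0 1) (hinf : ∃ j, p j ≠ 1 / 2) (hc : c ∈ Ioo 0 1)
    (hfix : IsFixedPt (emMap p) c) (hη : η ∈ Ioo 0 1) (hηc : η < c) : η < emMap p η :=
  sub_pos.1 <| sign_eq_one_iff.1 <|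
    (sign_emMap_sub_self_eq_sign_sub hp hinf hc hfix hη).trans (sign_pos (sub_pos.2 hηc))

theorem emMap_lt_of_lt (hp : ∀ i, p i ∈ Ioo 0 1) (hinf : ∃ j, p j ≠ 1 / 2) (hc : c ∈ Ioo 0 1)
    (hfix : IsFixedPt (emMap p) c) (hη : η ∈ Ioo 0 1) (hcη : c < η) : emMap p η < η :=
  sub_neg.1 <| sign_eq_neg_one_iff.1 <|
    (sign_emMap_sub_self_eq_sign_sub hp hinf hc hfix hη).trans (sign_neg (sub_neg.2 hcη))

end EMMap

theorem em_iterates_converge_general (N : ℕ) (p : Fin N → ℝ)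
    (hp : ∀ i, p i ∈ Set.Ioo (0:ℝ) 1) (hinf : ∃ j, p j ≠ 1 / 2)
    (T : ℝ → ℝ)
    (hT : ∀ η, T η = (1 / (N : ℝ)) * ∑ i, p i * η / (p i * η + (1 - p i) * (1 - η)))
    (ηhat : ℝ) (hηhat : ηhat ∈ Set.Ioo (0:ℝ) 1) (hfix : T ηhat = ηhat)
    (a : ℕ → ℝ) (ha0 : a 0 ∈ Set.Ioo (0:ℝ) 1) (hrec : ∀ t, a (t + 1) = T (a t)) :
    Filter.Tendsto a Filter.atTop (nhds ηhat) := by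
  obtain rfl : T = emMap p := funext fun η => by rw [hT, emMap, Fintype.card_fin]; rfl
  exact tendsto_orbit_of_monotoneOn ordConnected_Ioo
    ((monotoneOn_emMap hp).mono Ioo_subset_Icc_self)
    ((continuousOn_emMap hp).mono Ioo_subset_Icc_self) hηhat hfix
    (fun _ hη => lt_emMap_of_lt hp hinf hηhat hfix hη)
    (fun _ hη => emMap_lt_of_lt hp hinf hηhat hfix hη) ha0 hrec

theorem em_iterates_converge (N : ℕ) (hN : 0 < N) (p : Fin N → ℝ)
    (hp : ∀ i, p i ∈ Set.Ioo (0:ℝ) 1) (hinf : ∃ j, p j ≠ 1 / 2)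
    (T : ℝ → ℝ)
    (hT : ∀ η, T η = (1 / (N : ℝ)) * ∑ i, p i * η / (p i * η + (1 - p i) * (1 - η)))
    (ηhat : ℝ) (hηhat : ηhat ∈ Set.Ioo (0:ℝ) 1) (hfix : T ηhat = ηhat)
    (a : ℕ → ℝ) (ha0 : a 0 ∈ Set.Ioo (0:ℝ) 1) (hrec : ∀ t, a (t + 1) = T (a t)) :
    Filter.Tendsto a Filter.atTop (nhds ηhat) :=
  em_iterates_converge_general N p hp hinf T hT ηhat hηhat hfix a ha0 hrec
end
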